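/- Let f, g : 𝔸_f^× → ℂ be defined by f(x) = a_n for x ∈ n·Ẑ^×, f(x) = 0 if x is not integral, and g(x) = b_n for x ∈ n·Ẑ^×, g(x) = 0 if x is not integral. Let s₁, s₂ be complex numbers with Re(s₁) > k and Re(s₂) > l. Then ∫∫_{{(x,y) : |x|_f > |y|_f}} f(x)|x|_f^{s₁} g(y)|y|_f^{s₂} dμ(x) dμ(y) = L(F,G,s₁,s₂), where L(F,G,s₁,s₂) = ∑_{0 < n₁ < n₂} a_{n₁} b_{n₂} n₁^{-s₁} n₂^{-s₂} is the iterated (double) L-function of F and G. -/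

import Mathlib

open MeasureTheory

noncomputable section

instance (p : Nat.Primes) : Fact (p : ℕ).Prime := ⟨p.2⟩

/-- The group in which finite ideles live: tuples of nonzero `p`-adic numbers. -/
abbrev IdeleComponents : Type := ∀ p : Nat.Primes, ℚ_[(p : ℕ)]ˣ

/-- The group of finite ideles of `ℚ`: tuples of nonzero `p`-adic numbers which are
`p`-adic units for all but finitely many `p` (the unit group of the restricted
product of the `ℚ_p` with respect to the `ℤ_p`). -/
def FiniteIdeles : Subgroup IdeleComponents where
  carrier := {x | {p : Nat.Primes | ‖((x p : ℚ_[(p : ℕ)]))‖ ≠ 1}.Finite}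
  one_mem' := by
    simp
  mul_mem' := by
    intro x y hx hy
    refine (hx.union hy).subset ?_
    intro p hp
    by_contra h
    simp only [Set.mem_union, Set.mem_setOf_eq, not_or, not_not] at h
    apply hp
    simp [Pi.mul_apply, Units.val_mul, norm_mul, h.1, h.2]
  inv_mem' := by
    intro x hx
    refine hx.subset ?_
    intro p hp
    simp only [Set.mem_setOf_eq, Pi.inv_apply] at hp ⊢
    rw [Units.val_inv_eq_inv_val, norm_inv] at hp
    intro h
    rw [h] at hp
    simp at hp

/-- The idele norm of a finite idele: the product `∏_p |x_p|_p` over all primes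
(all but finitely many factors equal `1`). -/
def fnorm (x : FiniteIdeles) : ℝ :=
  ∏ᶠ p : Nat.Primes, ‖((x : IdeleComponents) p : ℚ_[(p : ℕ)])‖

/-- A finite idele is integral if all of its components are `p`-adic integers. -/
def IsIntegralIdele (x : FiniteIdeles) : Prop :=
  ∀ p : Nat.Primes, ‖((x : IdeleComponents) p : ℚ_[(p : ℕ)])‖ ≤ 1

/-- The subset `Ẑ^×` of the finite ideles: all components are `p`-adic units. -/
def zHatUnits : Set FiniteIdeles :=
  {x | ∀ p : Nat.Primes, ‖((x : IdeleComponents) p : ℚ_[(p : ℕ)])‖ = 1}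

/-!
The integral ideles are the disjoint union of the cosets `n · Ẑ^×`; each has measure
`μ(Ẑ^×) = 1` by translation invariance, and `|x|_f = 1/n` on it by the product formula for `n`.
On the region `|x|_f > |y|_f` the integrand is therefore supported on the products
`n₁ · Ẑ^× × n₂ · Ẑ^×` with `n₁ < n₂`, where it is the constant `a_{n₁} b_{n₂} n₁^{-s₁} n₂^{-s₂}`,
and countable additivity of the integral turns it into the double series.
-/

open Set Function

theorem Padic.norm_primeCast (p q : ℕ) [Fact p.Prime] [Fact q.Prime] :
    ‖(q : ℚ_[p])‖ = if q = p then (p : ℝ)⁻¹ else 1 := by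
  split_ifs with h
  · subst h
    exact Padic.norm_p
  · rw [Padic.norm_natCast_eq_one_iff, Nat.coprime_primes Fact.out Fact.out]
    exact Ne.symm h

theorem finite_mulSupport_padicNorm_natCast {n : ℕ} (hn : n ≠ 0) :
    (mulSupport fun p : Nat.Primes => ‖(n : ℚ_[(p : ℕ)])‖).Finite := by
  refine ((finite_Iic n).preimage Nat.Primes.coe_nat_injective.injOn).subset
    fun (p : Nat.Primes) hp => ?_
  by_contra hpn
  refine hp (Padic.norm_natCast_eq_one_iff.2 ((Nat.Prime.coprime_iff_not_dvd p.2).2 ?_))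
  exact fun hdvd => hpn (Nat.le_of_dvd hn.bot_lt hdvd)

theorem finprod_padicNorm_natCast {n : ℕ} (hn : n ≠ 0) :
    ∏ᶠ p : Nat.Primes, ‖(n : ℚ_[(p : ℕ)])‖ = (n : ℝ)⁻¹ := by
  induction n using Nat.recOnMul with
  | zero => exact absurd rfl hn
  | one => simp
  | prime q hq =>
    have : Fact q.Prime := ⟨hq⟩
    refine (finprod_eq_single _ (⟨q, hq⟩ : Nat.Primes) fun p hp => ?_).trans Padic.norm_p
    rw [Padic.norm_primeCast, if_neg fun h => hp (Subtype.ext h.symm)]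
  | mul a b iha ihb =>
    have ha : a ≠ 0 := left_ne_zero_of_mul hn
    have hb : b ≠ 0 := right_ne_zero_of_mul hn
    simp_rw [Nat.cast_mul, norm_mul]
    rw [finprod_mul_distrib (finite_mulSupport_padicNorm_natCast ha)
      (finite_mulSupport_padicNorm_natCast hb), iha ha, ihb hb, mul_inv]

/-- When `c` is not summable both sides are junk `0`: in finite dimension summability is
absolute summability, which is integrability of `f`. -/
theorem integral_eq_tsum_of_const_on_pairwiseDisjoint {ι X E : Type*} [Countable ι]
    [MeasurableSpace X] [NormedAddCommGroup E] [NormedSpace ℝ E] [FiniteDimensional ℝ E]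
    {ν : Measure X} {S : ι → Set X} {f : X → E} {c : ι → E}
    (hS : ∀ i, MeasurableSet (S i)) (hdisj : Pairwise (Disjoint on S)) (hν : ∀ i, ν (S i) = 1)
    (hf : ∀ i, EqOn f (fun _ => c i) (S i)) (hf0 : ∀ x, x ∉ ⋃ i, S i → f x = 0) :
    ∫ x, f x ∂ν = ∑' i, c i := by
  have := FiniteDimensional.complete ℝ E
  have hνreal : ∀ i, ν.real (S i) = 1 := fun i => by simp [measureReal_def, hν i]
  have hpiece : ∀ i, ∫ x in S i, f x ∂ν = c i := fun i => by
    rw [setIntegral_congr_fun (hS i) (hf i), setIntegral_const, hνreal, one_smul]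
  have hpiece_norm : ∀ i, ∫ x in S i, ‖f x‖ ∂ν = ‖c i‖ := fun i => by
    rw [setIntegral_congr_fun (hS i) fun x hx => congrArg norm (hf i hx), setIntegral_const,
      hνreal, one_smul]
  have hintegrableOn : ∀ i, IntegrableOn f (S i) ν := fun i =>
    (integrableOn_const (hν i ▸ ENNReal.one_ne_top)).congr_fun (hf i).symm (hS i)
  rw [← setIntegral_eq_integral_of_forall_compl_eq_zero hf0]
  by_cases hc : Summable c
  · have hint : IntegrableOn f (⋃ i, S i) ν :=
      integrableOn_iUnion_of_summable_integral_norm hintegrableOn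
        (by simpa only [hpiece_norm] using summable_norm_iff.2 hc)
    rw [integral_iUnion hS hdisj hint]
    exact tsum_congr hpiece
  · rw [tsum_eq_zero_of_not_summable hc, integral_undef fun hint => hc ?_]
    simpa only [hpiece_norm, summable_norm_iff] using
      (hasSum_integral_iUnion hS hdisj hint.norm).summable

namespace FiniteIdeles

def ofPNat (n : ℕ+) : FiniteIdeles :=
  ⟨fun p => Units.mk0 ((n : ℕ) : ℚ_[(p : ℕ)]) (by exact_mod_cast n.ne_zero),
    finite_mulSupport_padicNorm_natCast n.ne_zero⟩

/-- The coset `n · Ẑ^×`. -/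
def natCoset (n : ℕ+) : Set FiniteIdeles :=
  {x | ∀ p : Nat.Primes, ‖((x : IdeleComponents) p : ℚ_[(p : ℕ)])‖
    = ‖((n : ℕ) : ℚ_[(p : ℕ)])‖}

theorem natCoset_eq_preimage (n : ℕ+) :
    natCoset n = (fun x => (ofPNat n)⁻¹ * x) ⁻¹' zHatUnits := by
  ext x
  have hn : ∀ p : Nat.Primes, ‖((n : ℕ) : ℚ_[(p : ℕ)])‖ ≠ 0 := fun p =>
    norm_ne_zero_iff.2 (by exact_mod_cast n.ne_zero)
  have hnorm : ∀ p : Nat.Primes,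
      ‖((((ofPNat n)⁻¹ * x : FiniteIdeles) : IdeleComponents) p : ℚ_[(p : ℕ)])‖
        = ‖((n : ℕ) : ℚ_[(p : ℕ)])‖⁻¹ * ‖((x : IdeleComponents) p : ℚ_[(p : ℕ)])‖ :=
    fun p => by rw [← norm_inv, ← norm_mul]; rfl
  simp only [natCoset, zHatUnits, mem_ofPred_eq, mem_preimage, hnorm]
  exact forall_congr' fun p => by rw [inv_mul_eq_one₀ (hn p), eq_comm]

theorem measurableSet_natCoset [MeasurableSpace FiniteIdeles] {μ : Measure FiniteIdeles}
    (hinv : ∀ a : FiniteIdeles, MeasurePreserving (fun x => a * x) μ μ)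
    (hZmeas : MeasurableSet zHatUnits) (n : ℕ+) : MeasurableSet (natCoset n) := by
  rw [natCoset_eq_preimage]
  exact (hinv _).measurable hZmeas

theorem measure_natCoset [MeasurableSpace FiniteIdeles] {μ : Measure FiniteIdeles}
    (hinv : ∀ a : FiniteIdeles, MeasurePreserving (fun x => a * x) μ μ)
    (hZmeas : MeasurableSet zHatUnits) (n : ℕ+) : μ (natCoset n) = μ zHatUnits := by
  rw [natCoset_eq_preimage, (hinv _).measure_preimage hZmeas.nullMeasurableSet]

theorem fnorm_of_mem_natCoset {n : ℕ+} {x : FiniteIdeles} (hx : x ∈ natCoset n) :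
    fnorm x = ((n : ℕ) : ℝ)⁻¹ := by
  rw [fnorm, finprod_congr hx, finprod_padicNorm_natCast n.ne_zero]

theorem fnorm_lt_fnorm_iff {m n : ℕ+} {x y : FiniteIdeles} (hx : x ∈ natCoset m)
    (hy : y ∈ natCoset n) : fnorm y < fnorm x ↔ m < n := by
  rw [fnorm_of_mem_natCoset hx, fnorm_of_mem_natCoset hy,
    inv_lt_inv₀ (by exact_mod_cast n.pos) (by exact_mod_cast m.pos)]
  exact_mod_cast Iff.rfl

theorem eq_of_mem_natCoset {m n : ℕ+} {x : FiniteIdeles} (hm : x ∈ natCoset m)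
    (hn : x ∈ natCoset n) : m = n := by
  have := (fnorm_of_mem_natCoset hm).symm.trans (fnorm_of_mem_natCoset hn)
  exact_mod_cast inv_injective this

/-- An integral idele `x` lies in `n · Ẑ^×` for `n = ∏ p ^ v_p(x_p)`, the product running over
the finitely many `p` with `|x_p|_p ≠ 1`. -/
theorem exists_mem_natCoset {x : FiniteIdeles} (hx : IsIntegralIdele x) :
    ∃ n : ℕ+, x ∈ natCoset n := by
  have hfin : {p : Nat.Primes | ‖((x : IdeleComponents) p : ℚ_[(p : ℕ)])‖ ≠ 1}.Finite := x.2
  set e : Nat.Primes → ℕ := fun p =>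
    (((x : IdeleComponents) p : ℚ_[(p : ℕ)]).valuation).toNat
  refine ⟨⟨∏ p ∈ hfin.toFinset, (p : ℕ) ^ e p,
    Finset.prod_pos fun p _ => pow_pos p.2.pos _⟩, fun q => ?_⟩
  have hprod : ‖((∏ p ∈ hfin.toFinset, (p : ℕ) ^ e p : ℕ) : ℚ_[(q : ℕ)])‖
      = if q ∈ hfin.toFinset then ((q : ℕ) : ℝ)⁻¹ ^ e q else 1 := by
    simp_rw [Nat.cast_prod, Nat.cast_pow, norm_prod, norm_pow, Padic.norm_primeCast,
      Nat.Primes.coe_nat_inj, ite_pow, one_pow]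
    exact Finset.prod_ite_eq' _ _ _
  rw [PNat.mk_coe, hprod]
  split_ifs with hq
  · have hv : 0 ≤ ((x : IdeleComponents) q : ℚ_[(q : ℕ)]).valuation :=
      (Padic.norm_le_one_iff_val_nonneg _).1 (hx q)
    rw [Padic.norm_eq_zpow_neg_valuation (Units.ne_zero _), ← Int.toNat_of_nonneg hv, zpow_neg,
      zpow_natCast, inv_pow]
  · simpa using hq

end FiniteIdeles

theorem Complex.ofReal_natCast_inv_cpow (n : ℕ) (s : ℂ) :
    (((n : ℝ)⁻¹ : ℝ) : ℂ) ^ s = (n : ℂ) ^ (-s) := by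
  rw [ofReal_inv, ofReal_natCast, inv_cpow _ _ (by simp [natCast_arg, Real.pi_ne_zero.symm]),
    cpow_neg]

open FiniteIdeles in
theorem adelic_double_L_function_general
    (a b : ℕ+ → ℂ)
    (f g : FiniteIdeles → ℂ)
    (hf : ∀ (n : ℕ+) (x : FiniteIdeles),
      (∀ p : Nat.Primes, ‖((x : IdeleComponents) p : ℚ_[(p : ℕ)])‖
        = ‖((n : ℕ) : ℚ_[(p : ℕ)])‖) → f x = a n)
    (hf0 : ∀ x : FiniteIdeles, ¬ IsIntegralIdele x → f x = 0)
    (hg : ∀ (n : ℕ+) (x : FiniteIdeles),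
      (∀ p : Nat.Primes, ‖((x : IdeleComponents) p : ℚ_[(p : ℕ)])‖
        = ‖((n : ℕ) : ℚ_[(p : ℕ)])‖) → g x = b n)
    (hg0 : ∀ x : FiniteIdeles, ¬ IsIntegralIdele x → g x = 0)
    [MeasurableSpace FiniteIdeles] (μ : Measure FiniteIdeles) [SFinite μ]
    (hinv : ∀ a : FiniteIdeles, MeasurePreserving (fun x => a * x) μ μ)
    (hnorm : Measurable fnorm) (hZmeas : MeasurableSet zHatUnits)
    (hZ : μ zHatUnits = 1)
    (s₁ s₂ : ℂ) :
    ∫ z in {q : FiniteIdeles × FiniteIdeles | fnorm q.2 < fnorm q.1},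
      f z.1 * (fnorm z.1 : ℂ) ^ s₁ * g z.2 * (fnorm z.2 : ℂ) ^ s₂ ∂(μ.prod μ)
      = ∑' n : {m : ℕ+ × ℕ+ // m.1 < m.2},
          a (n : ℕ+ × ℕ+).1 * b (n : ℕ+ × ℕ+).2 *
            (((n : ℕ+ × ℕ+).1 : ℕ) : ℂ) ^ (-s₁) * (((n : ℕ+ × ℕ+).2 : ℕ) : ℂ) ^ (-s₂) := by
  have hT : MeasurableSet {q : FiniteIdeles × FiniteIdeles | fnorm q.2 < fnorm q.1} :=
    measurableSet_lt (hnorm.comp measurable_snd) (hnorm.comp measurable_fst)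
  rw [← integral_indicator hT]
  refine integral_eq_tsum_of_const_on_pairwiseDisjoint
    (S := fun i : {m : ℕ+ × ℕ+ // m.1 < m.2} => natCoset i.1.1 ×ˢ natCoset i.1.2)
    (fun i => (measurableSet_natCoset hinv hZmeas _).prod (measurableSet_natCoset hinv hZmeas _))
    (fun i j hij => disjoint_left.2 fun z hi hj =>
      hij (Subtype.ext (Prod.ext (eq_of_mem_natCoset hi.1 hj.1) (eq_of_mem_natCoset hi.2 hj.2))))
    (fun i => by
      rw [Measure.prod_prod, measure_natCoset hinv hZmeas, measure_natCoset hinv hZmeas, hZ,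
        one_mul])
    ?onPiece ?offPieces
  case onPiece =>
    rintro ⟨⟨m, n⟩, hmn⟩ z ⟨hx, hy⟩
    have hzT : z ∈ {q : FiniteIdeles × FiniteIdeles | fnorm q.2 < fnorm q.1} :=
      (fnorm_lt_fnorm_iff hx hy).2 hmn
    rw [indicator_of_mem hzT, hf m _ hx, hg n _ hy,
      fnorm_of_mem_natCoset hx, fnorm_of_mem_natCoset hy, Complex.ofReal_natCast_inv_cpow,
      Complex.ofReal_natCast_inv_cpow]
    ring
  case offPieces =>
    intro z hz
    refine indicator_apply_eq_zero.2 fun hzT => ?_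
    by_cases hx : IsIntegralIdele z.1
    · by_cases hy : IsIntegralIdele z.2
      · obtain ⟨m, hm⟩ := exists_mem_natCoset hx
        obtain ⟨n, hn⟩ := exists_mem_natCoset hy
        exact (hz (mem_iUnion.2 ⟨⟨(m, n), (fnorm_lt_fnorm_iff hm hn).1 hzT⟩, hm, hn⟩)).elim
      · simp [hg0 _ hy]
    · simp [hf0 _ hx]

/-- Let `F, G` be cusp forms of even positive weights `k, l` for
`SL₂(ℤ)` with Fourier coefficients `(a_n), (b_n)`, and let `f, g : 𝔸_f^× → ℂ` take
the value `a_n` (resp. `b_n`) on the coset `n·Ẑ^× = {x | ∀ p, |x_p|_p = |n|_p}` and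
`0` on non-integral ideles.  Let `μ` be a translation-invariant measure on the
finite ideles with `μ(Ẑ^×) = 1` (with `Ẑ^×` and the idele norm measurable, as for a
Borel measure on the idele topology).  For `Re s₁ > k` and `Re s₂ > l`, the
iterated adelic integral of `f(x)|x|_f^{s₁} g(y)|y|_f^{s₂}` over `|x|_f > |y|_f`
equals the double `L`-function
`L(F,G,s₁,s₂) = ∑_{0 < n₁ < n₂} a_{n₁} b_{n₂} n₁^{-s₁} n₂^{-s₂}`. -/
theorem adelic_double_L_function (k l : ℤ) (hk : Even k) (hk0 : 0 < k)
    (hl : Even l) (hl0 : 0 < l)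
    (F : CuspForm (CongruenceSubgroup.Gamma 1) k)
    (G : CuspForm (CongruenceSubgroup.Gamma 1) l)
    (a b : ℕ+ → ℂ)
    (hFa : ∀ z : UpperHalfPlane, F z =
      ∑' n : ℕ+, a n * Complex.exp (2 * Real.pi * Complex.I * (n : ℕ) * (z : ℂ)))
    (hGb : ∀ z : UpperHalfPlane, G z =
      ∑' n : ℕ+, b n * Complex.exp (2 * Real.pi * Complex.I * (n : ℕ) * (z : ℂ)))
    (f g : FiniteIdeles → ℂ)
    (hf : ∀ (n : ℕ+) (x : FiniteIdeles),
      (∀ p : Nat.Primes, ‖((x : IdeleComponents) p : ℚ_[(p : ℕ)])‖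
        = ‖((n : ℕ) : ℚ_[(p : ℕ)])‖) → f x = a n)
    (hf0 : ∀ x : FiniteIdeles, ¬ IsIntegralIdele x → f x = 0)
    (hg : ∀ (n : ℕ+) (x : FiniteIdeles),
      (∀ p : Nat.Primes, ‖((x : IdeleComponents) p : ℚ_[(p : ℕ)])‖
        = ‖((n : ℕ) : ℚ_[(p : ℕ)])‖) → g x = b n)
    (hg0 : ∀ x : FiniteIdeles, ¬ IsIntegralIdele x → g x = 0)
    [MeasurableSpace FiniteIdeles] (μ : Measure FiniteIdeles) [SFinite μ]
    (hinv : ∀ a : FiniteIdeles, MeasurePreserving (fun x => a * x) μ μ)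
    (hnorm : Measurable fnorm) (hZmeas : MeasurableSet zHatUnits)
    (hZ : μ zHatUnits = 1)
    (s₁ s₂ : ℂ) (h₁ : (k : ℝ) < s₁.re) (h₂ : (l : ℝ) < s₂.re) :
    ∫ z in {q : FiniteIdeles × FiniteIdeles | fnorm q.2 < fnorm q.1},
      f z.1 * (fnorm z.1 : ℂ) ^ s₁ * g z.2 * (fnorm z.2 : ℂ) ^ s₂ ∂(μ.prod μ)
      = ∑' n : {m : ℕ+ × ℕ+ // m.1 < m.2},
          a (n : ℕ+ × ℕ+).1 * b (n : ℕ+ × ℕ+).2 *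
            (((n : ℕ+ × ℕ+).1 : ℕ) : ℂ) ^ (-s₁) * (((n : ℕ+ × ℕ+).2 : ℕ) : ℂ) ^ (-s₂) :=
  adelic_double_L_function_general a b f g hf hf0 hg hg0 μ hinv hnorm hZmeas hZ s₁ s₂

end
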